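/- Let k ≥ 0 be an integer, and let 0 < c, φ, μ, σ, Σ, Λ ≤ 1 with σ < Σ < c. Then there exist λ > 0 and integers N and K ≥ 2 with the following property. Let G be a graph with |G| ≥ N such that there do not exist disjoint Z1, Z2 ⊆ V(G) with |Z1|, |Z2| ≥ |G|^{1-c} that are anticomplete to each other. Let (B_i : i∈I) be a blockade of length at least K in G, with shrinkage at most σ and linkage at most λ. Then there exist I' ⊆ I with |I'| = k and a subset B_i' ⊆ B_i for each i ∈ I' such that (B_i' : i∈I') has shrinkage at most Σ and has a (φ,μ)-band which is at most Λ. -/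

import Mathlib

/-- The max-degree from `X` to `Y`: the maximum over `v ∈ X` of the number of
neighbours of `v` in `Y` (0 if `X` is empty). -/
noncomputable def maxDegFrom {V : Type} (G : SimpleGraph V) (X Y : Set V) : ℕ :=
  sSup ((fun v => (G.neighborSet v ∩ Y).ncard) '' X)

/-- `X` is anticomplete to `Y`: there are no edges between them. -/
def AnticompSets {V : Type} (G : SimpleGraph V) (X Y : Set V) : Prop :=
  ∀ x ∈ X, ∀ y ∈ Y, ¬ G.Adj x y

/-- A pure pair: disjoint sets, complete or anticomplete to each other. -/
def PurePair {V : Type} (G : SimpleGraph V) (Z1 Z2 : Set V) : Prop :=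
  Disjoint Z1 Z2 ∧ ((∀ x ∈ Z1, ∀ y ∈ Z2, G.Adj x y) ∨ AnticompSets G Z1 Z2)

/-- `X` covers `B`: every vertex of `B` has a neighbour in `X`. -/
def CoversSet {V : Type} (G : SimpleGraph V) (X B : Set V) : Prop :=
  ∀ v ∈ B, ∃ x ∈ X, G.Adj x v

/-- `G` contains `H` as an induced subgraph. -/
def GraphContains {V W : Type} (G : SimpleGraph V) (H : SimpleGraph W) : Prop :=
  ∃ f : W → V, Function.Injective f ∧ ∀ a b : W, G.Adj (f a) (f b) ↔ H.Adj a b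

/-- The ordered graph `G` contains the ordered graph `H`: an order-preserving
induced-subgraph embedding. -/
def OrdGraphContains {V W : Type} [LinearOrder V] [LinearOrder W]
    (G : SimpleGraph V) (H : SimpleGraph W) : Prop :=
  ∃ f : W → V, StrictMono f ∧ ∀ a b : W, G.Adj (f a) (f b) ↔ H.Adj a b

/-- A blockade: a family of pairwise disjoint nonempty vertex subsets indexed by
a finite set of integers. -/
def IsBlockade {V : Type} (I : Finset ℤ) (B : ℤ → Set V) : Prop :=
  (∀ i ∈ I, (B i).Nonempty) ∧ ∀ i ∈ I, ∀ j ∈ I, i ≠ j → Disjoint (B i) (B j)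

/-- A blockade in an ordered graph: additionally the blocks are intervals
numbered in order. -/
def IsOrdBlockade {V : Type} [LinearOrder V] (I : Finset ℤ) (B : ℤ → Set V) : Prop :=
  IsBlockade I B ∧ ∀ i ∈ I, ∀ j ∈ I, i < j → ∀ u ∈ B i, ∀ v ∈ B j, u < v

/-- The blockade `(B i : i ∈ I)` has width at least `w`
(the width being the minimum cardinality of a block, `|G|` if `I = ∅`). -/
def WidthGE {V : Type} [Fintype V] (I : Finset ℤ) (B : ℤ → Set V) (w : ℝ) : Prop :=
  (∀ i ∈ I, w ≤ ((B i).ncard : ℝ)) ∧ w ≤ (Fintype.card V : ℝ)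

/-- The width of a blockade: the minimum cardinality of a block (`|G|` if `I = ∅`). -/
noncomputable def blockadeWidth {V : Type} [Fintype V] (I : Finset ℤ) (B : ℤ → Set V) : ℕ :=
  if h : I.Nonempty then I.inf' h (fun i => (B i).ncard) else Fintype.card V

/-- The blockade has shrinkage at most `s`: its width is at least `|G|^(1-s)`. -/
def ShrinkageLE {V : Type} [Fintype V] (I : Finset ℤ) (B : ℤ → Set V) (s : ℝ) : Prop :=
  WidthGE I B ((Fintype.card V : ℝ) ^ ((1 : ℝ) - s))

/-- The blockade has linkage at most `lam`: for all distinct `i, j`, the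
max-degree from `B i` to `B j` is at most `lam * |B j|`. -/
def LinkageLE {V : Type} (G : SimpleGraph V) (I : Finset ℤ) (B : ℤ → Set V) (lam : ℝ) : Prop :=
  ∀ i ∈ I, ∀ j ∈ I, i ≠ j → (maxDegFrom G (B i) (B j) : ℝ) ≤ lam * ((B j).ncard : ℝ)

/-- The blockade is `(phi, mu)`-shrink-resistant. -/
def ShrinkResistant {V : Type} [Fintype V] (G : SimpleGraph V) (I : Finset ℤ)
    (B : ℤ → Set V) (phi mu : ℝ) : Prop :=
  ∀ h ∈ I, ∀ j ∈ I, h ≠ j → ∀ X ⊆ B h, ∀ Y ⊆ B j,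
    mu * ((B h).ncard : ℝ) ≤ (X.ncard : ℝ) → mu * ((B j).ncard : ℝ) ≤ (Y.ncard : ℝ) →
    (maxDegFrom G (B h) (B j) : ℝ) * (Fintype.card V : ℝ) ^ (-phi) < (maxDegFrom G X Y : ℝ)

/-- `tau` is a `(phi, mu)`-band for the blockade `(B i : i ∈ I)`. -/
def IsBand {V : Type} [Fintype V] (G : SimpleGraph V) (I : Finset ℤ)
    (B : ℤ → Set V) (tau phi mu : ℝ) : Prop :=
  ∀ h ∈ I, ∀ j ∈ I, h ≠ j →
    ((maxDegFrom G (B h) (B j) : ℝ) ≤ tau * ((B j).ncard : ℝ)) ∧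
    ∀ X ⊆ B h, ∀ Y ⊆ B j,
      mu * ((B h).ncard : ℝ) ≤ (X.ncard : ℝ) → mu * ((B j).ncard : ℝ) ≤ (Y.ncard : ℝ) →
      tau * (Fintype.card V : ℝ) ^ (-phi) * ((B j).ncard : ℝ) < (maxDegFrom G X Y : ℝ)

/-- There do not exist disjoint anticomplete sets both of size at least `|G|^(1-c)`. -/
def NoBigAnticomp {V : Type} [Fintype V] (G : SimpleGraph V) (c : ℝ) : Prop :=
  ¬ ∃ Z1 Z2 : Set V, Disjoint Z1 Z2 ∧ AnticompSets G Z1 Z2 ∧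
      (Fintype.card V : ℝ) ^ ((1 : ℝ) - c) ≤ (Z1.ncard : ℝ) ∧
      (Fintype.card V : ℝ) ^ ((1 : ℝ) - c) ≤ (Z2.ncard : ℝ)

/-- The blockade `(B i : i ∈ H ∪ I ∪ J)` is leaf-covered with partition `(H, I, J)`
and parameters `w, W, lam, phi, mu, tau`. -/
def LeafCovered {V : Type} [Fintype V] (G : SimpleGraph V) (H I J : Finset ℤ)
    (B : ℤ → Set V) (w W lam phi mu tau : ℝ) : Prop :=
  WidthGE H B w ∧ LinkageLE G H B lam ∧ WidthGE I B W ∧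
  (∀ h ∈ H, ∀ j ∈ J, ∃ X ⊆ B j, CoversSet G X (B h) ∧
      ∀ i ∈ (H ∪ I).erase h, AnticompSets G X (B i)) ∧
  IsBand G (I ∪ J) B tau phi mu ∧
  (∀ h ∈ H, ∀ i ∈ I ∪ J, (maxDegFrom G (B h) (B i) : ℝ) ≤ tau * ((B i).ncard : ℝ))

/-- The clique number of a graph. -/
noncomputable def cliqueNumber {V : Type} (G : SimpleGraph V) : ℕ :=
  sSup {n | ∃ s : Finset V, G.IsNClique n s}


/-!
Measure a refinement `C` of `K` blocks by the product, over ordered pairs `(a, b)`, of the ratios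
`d(C a, C b) / |C b|`. While some pair is not `(ψ, α)`-resistant, replace its two blocks by the
witnessing `α`-fractions; this multiplies the product by at most `n^(-ψ) α^(-K²)`. As there is no
anticomplete pair of sets of size `n^(1-c)`, every ratio stays at least `1/n`, so after a bounded
number `T` of steps the refinement is resistant while each block has lost only a factor `α^T`:
shrinkage `σ` becomes `Σ`, and linkage `Λ α^T` bounds all ratios by `Λ`.
In a resistant blockade the two ratios of a pair agree up to `2 n^ψ`, and Ramsey's theorem,
colouring pairs by the scale of their ratio in base `n^ψ`, gives `k` blocks whose ratios all agree
up to `4 n^(3ψ)`. The largest of these ratios is a `(φ, μ)`-band once `ψ = φ / 8`.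
-/

open Finset

section MaxDegree

variable {V : Type} (G : SimpleGraph V)

lemma maxDegFrom_le_of_forall {X Y : Set V} {m : ℕ}
    (h : ∀ v ∈ X, (G.neighborSet v ∩ Y).ncard ≤ m) : maxDegFrom G X Y ≤ m :=
  csSup_le' <| by rintro _ ⟨v, hv, rfl⟩; exact h v hv

lemma ncard_neighborSet_inter_coe [DecidableRel G.Adj] (v : V) (X : Finset V) :
    (G.neighborSet v ∩ ↑X).ncard = {u ∈ X | G.Adj v u}.card := by
  rw [← Set.ncard_coe_finset]
  congr 1
  ext u
  simp [and_comm]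

variable [Finite V]

lemma bddAbove_ncard_neighborSet_inter (X Y : Set V) :
    BddAbove ((fun v => (G.neighborSet v ∩ Y).ncard) '' X) :=
  ⟨Y.ncard, by rintro _ ⟨v, -, rfl⟩; exact Set.ncard_le_ncard Set.inter_subset_right⟩

lemma ncard_inter_le_maxDegFrom {X Y : Set V} {v : V} (hv : v ∈ X) :
    (G.neighborSet v ∩ Y).ncard ≤ maxDegFrom G X Y :=
  le_csSup (bddAbove_ncard_neighborSet_inter G X Y) ⟨v, hv, rfl⟩

lemma maxDegFrom_le_ncard (X Y : Set V) : maxDegFrom G X Y ≤ Y.ncard :=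
  maxDegFrom_le_of_forall G fun _ _ => Set.ncard_le_ncard Set.inter_subset_right

lemma maxDegFrom_mono {X X' Y Y' : Set V} (hX : X' ⊆ X) (hY : Y' ⊆ Y) :
    maxDegFrom G X' Y' ≤ maxDegFrom G X Y :=
  maxDegFrom_le_of_forall G fun _ hv =>
    (Set.ncard_le_ncard (Set.inter_subset_inter_right _ hY)).trans
      (ncard_inter_le_maxDegFrom G (hX hv))

lemma exists_maxDegFrom_eq {X : Set V} (Y : Set V) (hX : X.Nonempty) :
    ∃ v ∈ X, (G.neighborSet v ∩ Y).ncard = maxDegFrom G X Y :=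
  Nat.sSup_mem (hX.image _) (bddAbove_ncard_neighborSet_inter G X Y)

lemma sum_ncard_neighborSet_inter_le (X Y : Finset V) :
    ∑ v ∈ Y, (G.neighborSet v ∩ ↑X).ncard ≤ X.card * maxDegFrom G ↑X ↑Y := by
  classical
  calc ∑ v ∈ Y, (G.neighborSet v ∩ ↑X).ncard
      = ∑ v ∈ Y, (X.bipartiteAbove G.Adj v).card := by
        simp only [ncard_neighborSet_inter_coe, bipartiteAbove]
    _ = ∑ u ∈ X, (Y.bipartiteBelow G.Adj u).card :=
        sum_card_bipartiteAbove_eq_sum_card_bipartiteBelow _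
    _ = ∑ u ∈ X, (G.neighborSet u ∩ ↑Y).ncard := by
        simp only [ncard_neighborSet_inter_coe, bipartiteBelow, G.adj_comm]
    _ ≤ ∑ _u ∈ X, maxDegFrom G ↑X ↑Y :=
        sum_le_sum fun u hu => ncard_inter_le_maxDegFrom G (mem_coe.2 hu)
    _ = X.card * maxDegFrom G ↑X ↑Y := by rw [sum_const, smul_eq_mul]

/-- Markov's inequality for the degrees from `Y` into `X`, which are `|X| d(X, Y)` in total. -/
lemma exists_subset_maxDegFrom_mul_ncard_le (X Y : Set V) :
    ∃ Y' ⊆ Y, Y.ncard ≤ 2 * Y'.ncard ∧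
      maxDegFrom G Y' X * Y.ncard ≤ 2 * (X.ncard * maxDegFrom G X Y) := by
  classical
  obtain ⟨X, rfl⟩ := (Set.toFinite X).exists_finset_coe
  obtain ⟨Y, rfl⟩ := (Set.toFinite Y).exists_finset_coe
  simp only [Set.ncard_coe_finset]
  set D := X.card * maxDegFrom G ↑X ↑Y
  set deg := fun v => (G.neighborSet v ∩ ↑X).ncard
  set low := {v ∈ Y | deg v * Y.card ≤ 2 * D}
  set high := {v ∈ Y | ¬ deg v * Y.card ≤ 2 * D}
  have hhigh : high.card * (2 * D + 1) ≤ D * Y.card :=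
    calc high.card * (2 * D + 1) = ∑ _v ∈ high, (2 * D + 1) := by rw [sum_const, smul_eq_mul]
      _ ≤ ∑ v ∈ high, deg v * Y.card := sum_le_sum fun v hv => by
          simpa [high] using (mem_filter.1 hv).2
      _ = (∑ v ∈ high, deg v) * Y.card := (sum_mul ..).symm
      _ ≤ D * Y.card := Nat.mul_le_mul_right _ <|
          (sum_le_sum_of_subset (filter_subset _ _)).trans (sum_ncard_neighborSet_inter_le G X Y)
  have hsplit : low.card + high.card = Y.card := card_filter_add_card_filter_not _
  refine ⟨↑low, coe_subset.2 (filter_subset _ _), ?_, ?_⟩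
  · rw [Set.ncard_coe_finset]
    have : 2 * high.card ≤ Y.card := by nlinarith
    omega
  · rcases (↑low : Set V).eq_empty_or_nonempty with hempty | hlow
    · simp [hempty, maxDegFrom]
    · obtain ⟨v, hv, hdeg⟩ := exists_maxDegFrom_eq G (↑X) hlow
      rw [← hdeg]
      exact (mem_filter.1 hv).2

end MaxDegree

section Potential

variable {V : Type} (G : SimpleGraph V)

noncomputable def degRatio (X Y : Set V) : ℝ :=
  maxDegFrom G X Y / Y.ncard

noncomputable def linkPotential (I : Finset ℤ) (C : ℤ → Set V) : ℝ :=
  ∏ p ∈ I.offDiag, degRatio G (C p.1) (C p.2)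

lemma degRatio_nonneg (X Y : Set V) : 0 ≤ degRatio G X Y := by
  unfold degRatio; positivity

variable [Fintype V]

lemma degRatio_le_one (X Y : Set V) : degRatio G X Y ≤ 1 :=
  div_le_one_of_le₀ (by exact_mod_cast maxDegFrom_le_ncard G X Y) (Nat.cast_nonneg _)

lemma one_le_degRatio_mul_card {X Y : Set V} (h : 1 ≤ maxDegFrom G X Y) :
    1 ≤ degRatio G X Y * Fintype.card V := by
  have hY : 0 < Y.ncard := by have := maxDegFrom_le_ncard G X Y; omega
  have hYn : (Y.ncard : ℝ) ≤ Fintype.card V := by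
    exact_mod_cast (Set.ncard_le_card Y).trans_eq Nat.card_eq_fintype_card
  rw [degRatio, div_mul_eq_mul_div, le_div_iff₀ (by positivity), one_mul]
  exact hYn.trans (le_mul_of_one_le_left (by positivity) (by exact_mod_cast h))

lemma NoBigAnticomp.one_le_maxDegFrom {c : ℝ} (hG : NoBigAnticomp G c) {X Y : Set V}
    (hXY : Disjoint X Y) (hX : (Fintype.card V : ℝ) ^ (1 - c) ≤ X.ncard)
    (hY : (Fintype.card V : ℝ) ^ (1 - c) ≤ Y.ncard) : 1 ≤ maxDegFrom G X Y := by
  by_contra! h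
  refine hG ⟨X, Y, hXY, fun x hx y hy hxy => ?_, hX, hY⟩
  have := ncard_inter_le_maxDegFrom G (Y := Y) hx
  have := (Set.ncard_pos (s := G.neighborSet x ∩ Y)).2 ⟨y, hxy, hy⟩
  omega

lemma degRatio_le_of_subset {α ε : ℝ} (hα : 0 < α) (hε : 0 ≤ ε) {X X' Y Y' : Set V}
    (hY : Y' ⊆ Y) (hYα : α * Y.ncard ≤ Y'.ncard)
    (hd : (maxDegFrom G X' Y' : ℝ) ≤ ε * maxDegFrom G X Y) :
    degRatio G X' Y' ≤ ε * α⁻¹ * degRatio G X Y := by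
  rcases Nat.eq_zero_or_pos Y'.ncard with h0 | hpos
  · rw [degRatio, h0, Nat.cast_zero, div_zero]
    exact mul_nonneg (by positivity) (degRatio_nonneg G X Y)
  have hYpos : (0 : ℝ) < Y.ncard := by exact_mod_cast hpos.trans_le (Set.ncard_le_ncard hY)
  calc degRatio G X' Y' ≤ ε * maxDegFrom G X Y / (α * Y.ncard) :=
        div_le_div₀ (by positivity) hd (by positivity) hYα
    _ = ε * α⁻¹ * degRatio G X Y := by rw [degRatio]; field_simp

lemma exists_shrink_of_not_shrinkResistant {I : Finset ℤ} {C : ℤ → Set V} {α ψ : ℝ}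
    (hα0 : 0 < α) (hα1 : α ≤ 1) (hres : ¬ ShrinkResistant G I C ψ α) :
    ∃ D : ℤ → Set V, (∀ i ∈ I, D i ⊆ C i ∧ α * (C i).ncard ≤ (D i).ncard) ∧
      linkPotential G I D ≤
        (Fintype.card V : ℝ) ^ (-ψ) * α⁻¹ ^ #I.offDiag * linkPotential G I C := by
  classical
  simp only [ShrinkResistant, not_forall, not_lt, exists_prop] at hres
  obtain ⟨h, hh, j, hj, hne, X, hX, Y, hY, hXα, hYα, hXY⟩ := hres
  set D := Function.update (Function.update C h X) j Y
  have hDh : D h = X := by simp [D, Function.update_of_ne hne]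
  have hDj : D j = Y := by simp [D]
  have hD : ∀ i ∈ I, D i ⊆ C i ∧ α * (C i).ncard ≤ (D i).ncard := by
    intro i hi
    by_cases hij : i = j
    · subst hij; exact hDj ▸ ⟨hY, hYα⟩
    by_cases hih : i = h
    · subst hih; exact hDh ▸ ⟨hX, hXα⟩
    simp only [D, Function.update_of_ne hij, Function.update_of_ne hih]
    exact ⟨subset_rfl, mul_le_of_le_one_left (Nat.cast_nonneg _) hα1⟩
  refine ⟨D, hD, ?_⟩
  have hfactor : ∀ p ∈ I.offDiag, degRatio G (D p.1) (D p.2) ≤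
      (if p = (h, j) then (Fintype.card V : ℝ) ^ (-ψ) else 1) * α⁻¹ *
        degRatio G (C p.1) (C p.2) := by
    rintro ⟨a, b⟩ hp
    obtain ⟨ha, hb, -⟩ := mem_offDiag.1 hp
    refine degRatio_le_of_subset G hα0 (by positivity) (hD b hb).1 (hD b hb).2 ?_
    split_ifs with hab
    · obtain ⟨rfl, rfl⟩ := Prod.mk.inj hab
      rw [hDh, hDj, mul_comm]
      exact hXY
    · rw [one_mul]
      exact_mod_cast maxDegFrom_mono G (hD a ha).1 (hD b hb).1
  calc linkPotential G I D
      ≤ ∏ p ∈ I.offDiag, ((if p = (h, j) then (Fintype.card V : ℝ) ^ (-ψ) else 1) * α⁻¹ *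
          degRatio G (C p.1) (C p.2)) :=
        prod_le_prod (fun _ _ => degRatio_nonneg G _ _) hfactor
    _ = (Fintype.card V : ℝ) ^ (-ψ) * α⁻¹ ^ #I.offDiag * linkPotential G I C := by
        rw [prod_mul_distrib, prod_mul_distrib, prod_ite_eq',
          if_pos (mem_offDiag.2 ⟨hh, hj, hne⟩), prod_const, linkPotential]

end Potential

section Descent

variable {V : Type} [Fintype V] (G : SimpleGraph V)

lemma NoBigAnticomp.one_le_linkPotential_mul {c : ℝ} (hG : NoBigAnticomp G c) {I : Finset ℤ}
    {C : ℤ → Set V} (hdisj : ∀ i ∈ I, ∀ j ∈ I, i ≠ j → Disjoint (C i) (C j))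
    (hsize : ∀ i ∈ I, (Fintype.card V : ℝ) ^ (1 - c) ≤ (C i).ncard) :
    1 ≤ linkPotential G I C * (Fintype.card V : ℝ) ^ #I.offDiag := by
  rw [linkPotential, ← prod_const, ← prod_mul_distrib]
  refine one_le_prod fun p hp => ?_
  obtain ⟨hp1, hp2, hne⟩ := mem_offDiag.1 hp
  exact one_le_degRatio_mul_card G <|
    hG.one_le_maxDegFrom G (hdisj _ hp1 _ hp2 hne) (hsize _ hp1) (hsize _ hp2)

/-- `t` shrinking steps multiply the potential by at most `(n^(-ψ) α^(-M))^t`, where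
`M = #I.offDiag`, and it never falls below `n^(-M)`. -/
theorem NoBigAnticomp.exists_shrinkResistant_refinement {c α ψ : ℝ} (hG : NoBigAnticomp G c)
    {I : Finset ℤ} (hα0 : 0 < α) (hα1 : α ≤ 1) (t : ℕ) (C : ℤ → Set V)
    (hdisj : ∀ i ∈ I, ∀ j ∈ I, i ≠ j → Disjoint (C i) (C j))
    (hsize : ∀ i ∈ I, (Fintype.card V : ℝ) ^ (1 - c) ≤ α ^ t * (C i).ncard)
    (hpot : ((Fintype.card V : ℝ) ^ (-ψ) * α⁻¹ ^ #I.offDiag) ^ t *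
      (linkPotential G I C * (Fintype.card V : ℝ) ^ #I.offDiag) < 1) :
    ∃ C' : ℤ → Set V, (∀ i ∈ I, C' i ⊆ C i ∧ α ^ t * (C i).ncard ≤ (C' i).ncard) ∧
      ShrinkResistant G I C' ψ α := by
  induction t generalizing C with
  | zero =>
    simp only [pow_zero, one_mul] at hsize hpot
    exact absurd (hG.one_le_linkPotential_mul G hdisj hsize) hpot.not_ge
  | succ t ih =>
    have hαt : α ^ (t + 1) ≤ 1 := pow_le_one₀ hα0.le hα1
    by_cases hres : ShrinkResistant G I C ψ α
    · exact ⟨C, fun i _ => ⟨subset_rfl, mul_le_of_le_one_left (Nat.cast_nonneg _) hαt⟩, hres⟩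
    obtain ⟨D, hD, hpotD⟩ := exists_shrink_of_not_shrinkResistant G hα0 hα1 hres
    have hshrink : ∀ i ∈ I, α ^ (t + 1) * (C i).ncard ≤ α ^ t * (D i).ncard := fun i hi => by
      rw [pow_succ, mul_assoc]
      exact mul_le_mul_of_nonneg_left (hD i hi).2 (by positivity)
    have hpot' : ((Fintype.card V : ℝ) ^ (-ψ) * α⁻¹ ^ #I.offDiag) ^ t *
        (linkPotential G I D * (Fintype.card V : ℝ) ^ #I.offDiag) < 1 := by
      refine lt_of_le_of_lt ?_ hpot
      calc _ ≤ ((Fintype.card V : ℝ) ^ (-ψ) * α⁻¹ ^ #I.offDiag) ^ t *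
            (((Fintype.card V : ℝ) ^ (-ψ) * α⁻¹ ^ #I.offDiag * linkPotential G I C) *
              (Fintype.card V : ℝ) ^ #I.offDiag) := by gcongr
        _ = _ := by ring
    obtain ⟨C', hC', hres'⟩ := ih D
      (fun i hi j hj hne => (hdisj i hi j hj hne).mono (hD i hi).1 (hD j hj).1)
      (fun i hi => (hsize i hi).trans (hshrink i hi)) hpot'
    exact ⟨C', fun i hi => ⟨(hC' i hi).1.trans (hD i hi).1,
      (hshrink i hi).trans (hC' i hi).2⟩, hres'⟩

/-- Resistance applied to the half of `C j` of smallest degree into `C h`. -/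
lemma ShrinkResistant.maxDegFrom_mul_ncard_le {I : Finset ℤ} {C : ℤ → Set V} {α ψ : ℝ}
    (hres : ShrinkResistant G I C ψ α) (hα : α ≤ 1 / 2) {h j : ℤ} (hh : h ∈ I) (hj : j ∈ I)
    (hne : h ≠ j) :
    (maxDegFrom G (C j) (C h) : ℝ) * (C j).ncard ≤
      2 * (Fintype.card V : ℝ) ^ ψ * (maxDegFrom G (C h) (C j) * (C h).ncard) := by
  rcases (C j).eq_empty_or_nonempty with hempty | ⟨v, hv⟩
  · rw [hempty, Set.ncard_empty, Nat.cast_zero, mul_zero]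
    positivity
  have hn : (0 : ℝ) < Fintype.card V := by exact_mod_cast Fintype.card_pos_iff.2 ⟨v⟩
  obtain ⟨Y, hYsub, hYcard, hYdeg⟩ := exists_subset_maxDegFrom_mul_ncard_le G (C h) (C j)
  have hYα : α * (C j).ncard ≤ Y.ncard := by
    have : ((C j).ncard : ℝ) ≤ 2 * Y.ncard := by exact_mod_cast hYcard
    nlinarith [(Nat.cast_nonneg (C j).ncard : (0 : ℝ) ≤ _)]
  have hhα : α * (C h).ncard ≤ (C h).ncard :=
    mul_le_of_le_one_left (Nat.cast_nonneg _) (by linarith)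
  have key := hres j hj h hh hne.symm Y hYsub (C h) subset_rfl hYα hhα
  have hYdeg' : (maxDegFrom G Y (C h) : ℝ) * (C j).ncard ≤
      2 * ((C h).ncard * maxDegFrom G (C h) (C j)) := by exact_mod_cast hYdeg
  calc (maxDegFrom G (C j) (C h) : ℝ) * (C j).ncard
      = (maxDegFrom G (C j) (C h) * (Fintype.card V : ℝ) ^ (-ψ)) * (C j).ncard *
          (Fintype.card V : ℝ) ^ ψ := by
        rw [Real.rpow_neg hn.le]; field_simp
    _ ≤ maxDegFrom G Y (C h) * (C j).ncard * (Fintype.card V : ℝ) ^ ψ := by gcongr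
    _ ≤ 2 * ((C h).ncard * maxDegFrom G (C h) (C j)) * (Fintype.card V : ℝ) ^ ψ := by gcongr
    _ = _ := by ring

end Descent

section Ramsey

variable {ι : Type*} [LinearOrder ι]

lemma exists_subset_color_eq_of_lt (f : ι → ι → ℕ) {r : ℕ} (hr : 0 < r) (m : ℕ) {A : Finset ι}
    (hcol : ∀ a ∈ A, ∀ b ∈ A, a < b → f a b < r) (hA : (r + 1) ^ m ≤ #A) :
    ∃ S ⊆ A, #S = m ∧ ∀ a ∈ S, ∀ b ∈ S, ∀ b' ∈ S, a < b → a < b' → f a b = f a b' := by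
  classical
  induction m generalizing A with
  | zero => exact ⟨∅, empty_subset _, card_empty, by simp⟩
  | succ m ih =>
    have hAne : A.Nonempty := card_pos.1 <| (Nat.one_le_pow _ _ (by omega)).trans hA
    set x := A.min' hAne
    have hxA : x ∈ A := A.min'_mem hAne
    have hmaps : ∀ b ∈ A.erase x, f x b ∈ range r := fun b hb =>
      mem_range.2 <| hcol x hxA b (mem_of_mem_erase hb) (A.min'_lt_of_mem_erase_min' hAne hb)
    have hA' : r * (r + 1) ^ m + (r + 1) ^ m ≤ #A := by rw [pow_succ] at hA; linarith
    obtain ⟨t, -, hfib⟩ := exists_le_card_fiber_of_mul_le_card_of_maps_to (n := (r + 1) ^ m)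
      hmaps ⟨0, mem_range.2 hr⟩ (by
        rw [card_range, card_erase_of_mem hxA]
        exact Nat.le_sub_of_add_le (by have := Nat.one_le_pow m (r + 1) (by omega); omega))
    set F := {b ∈ A.erase x | f x b = t}
    have hFA : F ⊆ A := (filter_subset _ _).trans (erase_subset _ _)
    obtain ⟨S, hSF, hScard, hS⟩ := ih (fun a ha b hb => hcol a (hFA ha) b (hFA hb)) hfib
    have hxS : x ∉ S := fun hx => (mem_erase.1 (mem_filter.1 (hSF hx)).1).1 rfl
    have hmem : ∀ b ∈ insert x S, x < b → b ∈ S := fun b hb hxb =>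
      mem_of_mem_insert_of_ne hb hxb.ne'
    refine ⟨insert x S, insert_subset hxA (hSF.trans hFA),
      by rw [card_insert_of_notMem hxS, hScard], ?_⟩
    intro a ha b hb b' hb' hab hab'
    rcases mem_insert.1 ha with rfl | haS
    · rw [(mem_filter.1 (hSF (hmem b hb hab))).2, (mem_filter.1 (hSF (hmem b' hb' hab'))).2]
    · have hxa : x ≤ a := A.min'_le a (hFA (hSF haS))
      exact hS a haS b (hmem b hb (hxa.trans_lt hab)) b' (hmem b' hb' (hxa.trans_lt hab')) hab hab'

lemma exists_monochromatic_subset (f : ι → ι → ℕ) {r : ℕ} (hr : 0 < r) (m : ℕ) {A : Finset ι}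
    (hcol : ∀ a ∈ A, ∀ b ∈ A, a < b → f a b < r) (hA : (r + 1) ^ (r * m + 1) ≤ #A) :
    ∃ S ⊆ A, #S = m + 1 ∧ ∃ t, ∀ a ∈ S, ∀ b ∈ S, a < b → f a b = t := by
  classical
  obtain ⟨S, hSA, hScard, hS⟩ := exists_subset_color_eq_of_lt f hr _ hcol hA
  have hSne : S.Nonempty := card_pos.1 (by omega)
  set z := S.max' hSne
  have hzS : z ∈ S := S.max'_mem hSne
  have hmaps : ∀ a ∈ S.erase z, f a z ∈ range r := fun a ha =>
    mem_range.2 <| hcol a (hSA (mem_of_mem_erase ha)) z (hSA hzS)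
      (S.lt_max'_of_mem_erase_max' hSne ha)
  obtain ⟨t, -, hfib⟩ := exists_le_card_fiber_of_mul_le_card_of_maps_to (n := m) hmaps
    ⟨0, mem_range.2 hr⟩ (by rw [card_range, card_erase_of_mem hzS, hScard]; simp)
  obtain ⟨F, hF, hFcard⟩ := exists_subset_card_eq hfib
  have hFS : ∀ a ∈ F, a ∈ S.erase z ∧ f a z = t := fun a ha => mem_filter.1 (hF ha)
  have hzF : z ∉ F := fun hz => (mem_erase.1 (hFS z hz).1).1 rfl
  refine ⟨insert z F, insert_subset (hSA hzS) fun a ha => hSA (mem_of_mem_erase (hFS a ha).1),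
    by rw [card_insert_of_notMem hzF, hFcard], t, ?_⟩
  intro a ha b hb hab
  have haF : a ∈ F := mem_of_mem_insert_of_ne ha (hab.trans_le ?_).ne
  · have ha' := hFS a haF
    have hbS : b ∈ S := by
      rcases mem_insert.1 hb with rfl | hbF
      · exact hzS
      · exact mem_of_mem_erase (hFS b hbF).1
    rw [← ha'.2]
    exact hS a (mem_of_mem_erase ha'.1) b hbS z hzS hab (S.lt_max'_of_mem_erase_max' hSne ha'.1)
  · rcases mem_insert.1 hb with rfl | hbF
    · exact le_rfl
    · exact S.le_max' b (mem_of_mem_erase (hFS b hbF).1)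

end Ramsey

section ScaleClass

noncomputable def scaleClass (β x : ℝ) : ℕ :=
  ⌊Real.logb β x⁻¹⌋₊

lemma scaleClass_le {β x : ℝ} (hβ : 1 < β) {L : ℕ} (hx : (β ^ L)⁻¹ ≤ x) :
    scaleClass β x ≤ L := by
  have hx0 : 0 < x := hx.trans_lt' (by positivity)
  refine Nat.floor_le_of_le ?_
  calc Real.logb β x⁻¹ ≤ Real.logb β (β ^ L) :=
        (Real.logb_le_logb hβ (by positivity) (by positivity)).2
          (inv_le_of_inv_le₀ (by positivity) hx)
    _ = L := by rw [Real.logb_pow, Real.logb_self_eq_one hβ, mul_one]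

lemma lt_mul_of_scaleClass_eq {β x y : ℝ} (hβ : 1 < β) (hx0 : 0 < x) (hy0 : 0 < y)
    (hx1 : x ≤ 1) (h : scaleClass β x = scaleClass β y) : x < β * y := by
  have hlog : Real.logb β y⁻¹ < Real.logb β (β * x⁻¹) :=
    calc Real.logb β y⁻¹ < scaleClass β y + 1 := Nat.lt_floor_add_one _
      _ = scaleClass β x + 1 := by rw [h]
      _ ≤ Real.logb β x⁻¹ + 1 := by
          gcongr
          exact Nat.floor_le (Real.logb_nonneg hβ ((one_le_inv₀ hx0).2 hx1))
      _ = Real.logb β (β * x⁻¹) := by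
          rw [Real.logb_mul (by positivity) (by positivity), Real.logb_self_eq_one hβ, add_comm]
  rw [Real.logb_lt_logb_iff hβ (by positivity) (by positivity),
    inv_lt_iff_one_lt_mul₀ hy0] at hlog
  calc x = x * 1 := (mul_one x).symm
    _ < x * (β * x⁻¹ * y) := by gcongr
    _ = β * y := by field_simp

variable {ι : Type*} [LinearOrder ι]

lemma exists_subset_lt_mul_of_mem_Icc (ρ : ι → ι → ℝ) {β : ℝ} (hβ : 1 < β) (L m : ℕ)
    {A : Finset ι} (hρ : ∀ a ∈ A, ∀ b ∈ A, a < b → ρ a b ∈ Set.Icc (β ^ L)⁻¹ 1)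
    (hA : (L + 2) ^ ((L + 1) * m + 1) ≤ #A) :
    ∃ S ⊆ A, #S = m + 1 ∧
      ∀ a ∈ S, ∀ b ∈ S, ∀ u ∈ S, ∀ v ∈ S, a < b → u < v → ρ a b < β * ρ u v := by
  obtain ⟨S, hSA, hScard, t, hS⟩ := exists_monochromatic_subset (fun a b => scaleClass β (ρ a b))
    L.succ_pos m (fun a ha b hb hab => Nat.lt_succ_of_le (scaleClass_le hβ (hρ a ha b hb hab).1)) hA
  refine ⟨S, hSA, hScard, fun a ha b hb u hu v hv hab huv => ?_⟩
  have hpos : ∀ {x y}, x ∈ S → y ∈ S → x < y → 0 < ρ x y := fun hx hy hxy =>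
    (hρ _ (hSA hx) _ (hSA hy) hxy).1.trans_lt' (by positivity)
  exact lt_mul_of_scaleClass_eq hβ (hpos ha hb hab) (hpos hu hv huv)
    (hρ a (hSA ha) b (hSA hb) hab).2 ((hS a ha b hb hab).trans (hS u hu v hv huv).symm)

end ScaleClass

section Band

lemma le_mul_mul_of_swap_le {ι : Type*} [LinearOrder ι] (ρ : ι → ι → ℝ) {S : Finset ι}
    {β γ : ℝ} (hβ : 0 ≤ β) (hγ : 1 ≤ γ) (hρ : ∀ x y, 0 ≤ ρ x y)
    (hswap : ∀ x ∈ S, ∀ y ∈ S, x ≠ y → ρ y x ≤ γ * ρ x y)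
    (hsorted : ∀ a ∈ S, ∀ b ∈ S, ∀ u ∈ S, ∀ v ∈ S, a < b → u < v → ρ a b ≤ β * ρ u v)
    {x y h j : ι} (hx : x ∈ S) (hy : y ∈ S) (hxy : x ≠ y) (hh : h ∈ S) (hj : j ∈ S)
    (hhj : h ≠ j) : ρ x y ≤ γ * (β * (γ * ρ h j)) := by
  have hsort : ∀ x ∈ S, ∀ y ∈ S, x ≠ y → ∃ u ∈ S, ∃ v ∈ S, u < v ∧
      ρ x y ≤ γ * ρ u v ∧ ρ u v ≤ γ * ρ x y := by
    intro x hx y hy hxy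
    rcases hxy.lt_or_gt with hlt | hgt
    · exact ⟨x, hx, y, hy, hlt, le_mul_of_one_le_left (hρ x y) hγ,
        le_mul_of_one_le_left (hρ x y) hγ⟩
    · exact ⟨y, hy, x, hx, hgt, hswap y hy x hx hxy.symm, hswap x hx y hy hxy⟩
  obtain ⟨u, hu, v, hv, huv, hxy_uv, -⟩ := hsort x hx y hy hxy
  obtain ⟨u', hu', v', hv', huv', -, huv_hj⟩ := hsort h hh j hj hhj
  calc ρ x y ≤ γ * ρ u v := hxy_uv
    _ ≤ γ * (β * ρ u' v') := by gcongr; exact hsorted u hu v hv u' hu' v' hv' huv huv'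
    _ ≤ γ * (β * (γ * ρ h j)) := by gcongr

lemma le_rpow_pow_ceil_inv {n ψ : ℝ} (hn : 1 ≤ n) (hψ : 0 < ψ) : n ≤ (n ^ ψ) ^ ⌈ψ⁻¹⌉₊ := by
  rw [← Real.rpow_natCast, ← Real.rpow_mul (by linarith)]
  conv_lhs => rw [← Real.rpow_one n]
  refine Real.rpow_le_rpow_of_exponent_le hn ?_
  calc (1 : ℝ) = ψ * ψ⁻¹ := (mul_inv_cancel₀ hψ.ne').symm
    _ ≤ ψ * ⌈ψ⁻¹⌉₊ := by gcongr; exact Nat.le_ceil _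

lemma four_mul_rpow_pow_mul_rpow_neg_le {n ψ φ : ℝ} (hn : 0 < n) (hφ : 4 ≤ n ^ (φ - 4 * ψ)) :
    4 * (n ^ ψ) ^ 3 * n ^ (-φ) ≤ n ^ (-ψ) := by
  have : n ^ (-ψ) = n ^ (φ - 4 * ψ) * ((n ^ ψ) ^ 3 * n ^ (-φ)) := by
    rw [← Real.rpow_natCast, ← Real.rpow_mul hn.le, ← Real.rpow_add hn, ← Real.rpow_add hn]
    ring_nf
  rw [this, ← mul_assoc]
  gcongr

variable {V : Type} [Fintype V] (G : SimpleGraph V)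

lemma IsBand.mono {I J : Finset ℤ} {B : ℤ → Set V} {τ φ μ : ℝ} (h : IsBand G I B τ φ μ)
    (hJ : J ⊆ I) : IsBand G J B τ φ μ :=
  fun a ha b hb hab => h a (hJ ha) b (hJ hb) hab

lemma ShrinkResistant.degRatio_swap_le {I : Finset ℤ} {C : ℤ → Set V} {α ψ : ℝ}
    (hres : ShrinkResistant G I C ψ α) (hα : α ≤ 1 / 2) {h j : ℤ} (hh : h ∈ I) (hj : j ∈ I)
    (hne : h ≠ j) (hCh : 0 < (C h).ncard) (hCj : 0 < (C j).ncard) :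
    degRatio G (C j) (C h) ≤ 2 * (Fintype.card V : ℝ) ^ ψ * degRatio G (C h) (C j) := by
  have := hres.maxDegFrom_mul_ncard_le G hα hh hj hne
  rw [degRatio, degRatio, mul_div_assoc', div_le_div_iff₀ (by exact_mod_cast hCh)
    (by exact_mod_cast hCj)]
  linarith

theorem ShrinkResistant.exists_isBand {I : Finset ℤ} {C : ℤ → Set V} {α ψ φ μ : ℝ}
    (hres : ShrinkResistant G I C ψ α) (hαμ : α ≤ μ) (hα : α ≤ 1 / 2)
    (hn : 1 < (Fintype.card V : ℝ)) (hψ : 0 < ψ)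
    (hφ : 4 ≤ (Fintype.card V : ℝ) ^ (φ - 4 * ψ))
    (hlow : ∀ a ∈ I, ∀ b ∈ I, a ≠ b → 1 ≤ degRatio G (C a) (C b) * Fintype.card V)
    {m : ℕ} (hm : 0 < m) (hI : (⌈ψ⁻¹⌉₊ + 2) ^ ((⌈ψ⁻¹⌉₊ + 1) * m + 1) ≤ #I) :
    ∃ S ⊆ I, #S = m + 1 ∧ ∃ a ∈ I, ∃ b ∈ I, a ≠ b ∧
      IsBand G S C (degRatio G (C a) (C b)) φ μ := by
  set n : ℝ := (Fintype.card V : ℝ)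
  set ρ : ℤ → ℤ → ℝ := fun a b => degRatio G (C a) (C b)
  have hn0 : 0 < n := one_pos.trans hn
  have hρpos : ∀ a ∈ I, ∀ b ∈ I, a ≠ b → 0 < ρ a b := fun a ha b hb hab =>
    (mul_pos_iff_of_pos_right hn0).1 (one_pos.trans_le (hlow a ha b hb hab))
  have hcard : ∀ a ∈ I, ∀ b ∈ I, a ≠ b → 0 < (C b).ncard := fun a ha b hb hab =>
    Nat.pos_of_ne_zero fun h0 => (hρpos a ha b hb hab).ne' (by simp [ρ, degRatio, h0])
  obtain ⟨S, hSI, hScard, hS⟩ := exists_subset_lt_mul_of_mem_Icc ρ (Real.one_lt_rpow hn hψ)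
    ⌈ψ⁻¹⌉₊ m (fun a ha b hb hab => ⟨(inv_anti₀ hn0 (le_rpow_pow_ceil_inv hn.le hψ)).trans <|
      (inv_le_iff_one_le_mul₀ hn0).2 (hlow a ha b hb hab.ne), degRatio_le_one G _ _⟩) hI
  have hswap : ∀ a ∈ S, ∀ b ∈ S, a ≠ b → ρ b a ≤ 2 * n ^ ψ * ρ a b := fun a ha b hb hab =>
    hres.degRatio_swap_le G hα (hSI ha) (hSI hb) hab (hcard b (hSI hb) a (hSI ha) hab.symm)
      (hcard a (hSI ha) b (hSI hb) hab)
  have hcmp : ∀ x ∈ S, ∀ y ∈ S, x ≠ y → ∀ h ∈ S, ∀ j ∈ S, h ≠ j →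
      ρ x y ≤ 4 * (n ^ ψ) ^ 3 * ρ h j := fun x hx y hy hxy h hh j hj hhj =>
    (le_mul_mul_of_swap_le ρ (by positivity) (by linarith [Real.one_lt_rpow hn hψ])
      (fun _ _ => degRatio_nonneg G _ _) hswap (fun a ha b hb u hu v hv hab huv =>
        (hS a ha b hb u hu v hv hab huv).le) hx hy hxy hh hj hhj).trans_eq (by ring)
  obtain ⟨x, hx, y, hy, hxy⟩ := one_lt_card.1 (by omega : 1 < #S)
  obtain ⟨q, hq, hqmax⟩ := S.offDiag.exists_max_image (fun p => ρ p.1 p.2)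
    ⟨(x, y), mem_offDiag.2 ⟨hx, hy, hxy⟩⟩
  obtain ⟨hq1, hq2, hq⟩ := mem_offDiag.1 hq
  refine ⟨S, hSI, hScard, q.1, hSI hq1, q.2, hSI hq2, hq, fun h hh j hj hhj => ⟨?_, ?_⟩⟩
  · rw [← div_le_iff₀ (by exact_mod_cast hcard h (hSI hh) j (hSI hj) hhj)]
    exact hqmax (h, j) (mem_offDiag.2 ⟨hh, hj, hhj⟩)
  · intro X hX Y hY hXμ hYμ
    have hdeg : ρ h j * (C j).ncard = maxDegFrom G (C h) (C j) :=
      div_mul_cancel₀ _ (by exact_mod_cast (hcard h (hSI hh) j (hSI hj) hhj).ne')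
    calc ρ q.1 q.2 * n ^ (-φ) * (C j).ncard
        ≤ 4 * (n ^ ψ) ^ 3 * ρ h j * n ^ (-φ) * (C j).ncard := by
          gcongr; exact hcmp q.1 hq1 q.2 hq2 hq h hh j hj hhj
      _ = 4 * (n ^ ψ) ^ 3 * n ^ (-φ) * maxDegFrom G (C h) (C j) := by rw [← hdeg]; ring
      _ ≤ n ^ (-ψ) * maxDegFrom G (C h) (C j) := by
          gcongr; exact four_mul_rpow_pow_mul_rpow_neg_le hn0 hφ
      _ = maxDegFrom G (C h) (C j) * n ^ (-ψ) := mul_comm _ _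
      _ < maxDegFrom G X Y := hres h (hSI hh) j (hSI hj) hhj X hX Y hY
          ((mul_le_mul_of_nonneg_right hαμ (by positivity)).trans hXμ)
          ((mul_le_mul_of_nonneg_right hαμ (by positivity)).trans hYμ)

end Band

section Assembly

lemma eventually_le_natCast_rpow (C : ℝ) {δ : ℝ} (hδ : 0 < δ) :
    ∀ᶠ n : ℕ in Filter.atTop, C ≤ (n : ℝ) ^ δ :=
  ((tendsto_rpow_atTop hδ).comp tendsto_natCast_atTop_atTop).eventually_ge_atTop C

lemma pow_mul_mul_pow_lt_one {n δ ψ P : ℝ} {M T : ℕ} (hn : 1 < n) (hδ0 : 0 ≤ δ)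
    (hδ : δ ≤ n ^ (-(ψ / 2))) (hP0 : 0 ≤ P) (hP1 : P ≤ 1) (hT : 2 * (M : ℝ) < T * ψ) :
    δ ^ T * (P * n ^ M) < 1 :=
  calc δ ^ T * (P * n ^ M) ≤ (n ^ (-(ψ / 2))) ^ T * (1 * n ^ M) := by gcongr
    _ = n ^ (M - T * ψ / 2 : ℝ) := by
        rw [one_mul, ← Real.rpow_mul_natCast (by linarith), ← Real.rpow_natCast n M,
          ← Real.rpow_add (by linarith)]
        ring_nf
    _ < 1 := Real.rpow_lt_one_of_one_lt_of_neg hn (by linarith)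

variable {V : Type} [Fintype V] (G : SimpleGraph V)

lemma ShrinkageLE.rpow_le_mul_ncard {I : Finset ℤ} {B : ℤ → Set V} {sig Sig a : ℝ}
    (hσ : ShrinkageLE I B sig) (hn : 0 < (Fintype.card V : ℝ)) (ha : 0 < a)
    (haσ : a⁻¹ ≤ (Fintype.card V : ℝ) ^ (Sig - sig)) {i : ℤ} (hi : i ∈ I) :
    (Fintype.card V : ℝ) ^ (1 - Sig) ≤ a * (B i).ncard :=
  calc (Fintype.card V : ℝ) ^ (1 - Sig)
      ≤ (Fintype.card V : ℝ) ^ (1 - Sig) * (a * (Fintype.card V : ℝ) ^ (Sig - sig)) :=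
        le_mul_of_one_le_right (by positivity) ((inv_le_iff_one_le_mul₀' ha).1 haσ)
    _ = a * (Fintype.card V : ℝ) ^ (1 - sig) := by
        rw [mul_left_comm, ← Real.rpow_add hn]; ring_nf
    _ ≤ a * (B i).ncard := by gcongr; exact hσ.1 i hi

lemma shrinkageLE_of_forall {I : Finset ℤ} {B : ℤ → Set V} {Sig : ℝ} (hSig : 0 ≤ Sig)
    (hn : 1 ≤ (Fintype.card V : ℝ)) (h : ∀ i ∈ I, (Fintype.card V : ℝ) ^ (1 - Sig) ≤ (B i).ncard) :
    ShrinkageLE I B Sig :=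
  ⟨h, (Real.rpow_le_rpow_of_exponent_le hn (by linarith)).trans_eq (Real.rpow_one _)⟩

lemma LinkageLE.degRatio_le {I : Finset ℤ} {B C : ℤ → Set V} {Lam a : ℝ}
    (hlink : LinkageLE G I B (Lam * a)) (hLam : 0 ≤ Lam) {i j : ℤ} (hi : i ∈ I) (hj : j ∈ I)
    (hij : i ≠ j) (hCi : C i ⊆ B i) (hCj : C j ⊆ B j) (hsize : a * (B j).ncard ≤ (C j).ncard)
    (hpos : 0 < (C j).ncard) :
    degRatio G (C i) (C j) ≤ Lam := by
  rw [degRatio, div_le_iff₀ (by exact_mod_cast hpos)]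
  calc (maxDegFrom G (C i) (C j) : ℝ) ≤ maxDegFrom G (B i) (B j) := by
        exact_mod_cast maxDegFrom_mono G hCi hCj
    _ ≤ Lam * a * (B j).ncard := hlink i hi j hj hij
    _ ≤ Lam * (C j).ncard := by rw [mul_assoc]; gcongr

theorem NoBigAnticomp.exists_banded_subblockade {c sig Sig φ μ Lam α ψ : ℝ} {k K T : ℕ}
    (hG : NoBigAnticomp G c) {I : Finset ℤ} {B : ℤ → Set V} (hB : IsBlockade I B)
    (hKI : K ≤ #I) (hσ : ShrinkageLE I B sig) (hlink : LinkageLE G I B (Lam * α ^ T))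
    (hK : (⌈ψ⁻¹⌉₊ + 2) ^ ((⌈ψ⁻¹⌉₊ + 1) * (k + 1) + 1) ≤ K) (hT : 2 * ((K * K - K : ℕ) : ℝ) < T * ψ)
    (hα0 : 0 < α) (hαμ : α ≤ μ) (hα : α ≤ 1 / 2) (hψ : 0 < ψ) (hLam : 0 ≤ Lam)
    (hSig : 0 ≤ Sig) (hSigc : Sig ≤ c) (hn : 1 < (Fintype.card V : ℝ))
    (hαT : (α ^ T)⁻¹ ≤ (Fintype.card V : ℝ) ^ (Sig - sig))
    (hαM : α⁻¹ ^ (K * K - K) ≤ (Fintype.card V : ℝ) ^ (ψ / 2))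
    (hφ : 4 ≤ (Fintype.card V : ℝ) ^ (φ - 4 * ψ)) :
    ∃ I' ⊆ I, #I' = k ∧ ∃ B' : ℤ → Set V, (∀ i ∈ I', B' i ⊆ B i ∧ (B' i).Nonempty) ∧
      ShrinkageLE I' B' Sig ∧ ∃ τ : ℝ, 0 < τ ∧ τ ≤ Lam ∧ IsBand G I' B' τ φ μ := by
  set n : ℝ := (Fintype.card V : ℝ)
  have hn0 : 0 < n := one_pos.trans hn
  obtain ⟨I₀, hI₀I, hI₀K⟩ := exists_subset_card_eq hKI
  have hM : #I₀.offDiag = K * K - K := by rw [offDiag_card, hI₀K]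
  have hdisj : ∀ i ∈ I₀, ∀ j ∈ I₀, i ≠ j → Disjoint (B i) (B j) := fun i hi j hj hij =>
    hB.2 i (hI₀I hi) j (hI₀I hj) hij
  have hwide : ∀ i ∈ I₀, n ^ (1 - Sig) ≤ α ^ T * (B i).ncard := fun i hi =>
    hσ.rpow_le_mul_ncard hn0 (pow_pos hα0 T) hαT (hI₀I hi)
  have hcSig : n ^ (1 - c) ≤ n ^ (1 - Sig) := Real.rpow_le_rpow_of_exponent_le hn.le (by linarith)
  have hbudget :
      (n ^ (-ψ) * α⁻¹ ^ #I₀.offDiag) ^ T * (linkPotential G I₀ B * n ^ #I₀.offDiag) < 1 := by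
    refine pow_mul_mul_pow_lt_one hn (by positivity) ?_
      (prod_nonneg fun _ _ => degRatio_nonneg G _ _)
      (prod_le_one (fun _ _ => degRatio_nonneg G _ _) fun _ _ => degRatio_le_one G _ _) (hM ▸ hT)
    calc n ^ (-ψ) * α⁻¹ ^ #I₀.offDiag ≤ n ^ (-ψ) * n ^ (ψ / 2) := by rw [hM]; gcongr
      _ = n ^ (-(ψ / 2)) := by rw [← Real.rpow_add hn0]; ring_nf
  obtain ⟨C, hCB, hres⟩ := hG.exists_shrinkResistant_refinement G hα0 (by linarith) T B hdisj
    (fun i hi => hcSig.trans (hwide i hi)) hbudget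
  have hCwide : ∀ i ∈ I₀, n ^ (1 - Sig) ≤ (C i).ncard := fun i hi =>
    (hwide i hi).trans (hCB i hi).2
  have hCpos : ∀ i ∈ I₀, 0 < (C i).ncard := fun i hi =>
    Nat.cast_pos.1 <| (hCwide i hi).trans_lt' (by positivity)
  have hlow : ∀ a ∈ I₀, ∀ b ∈ I₀, a ≠ b → 1 ≤ degRatio G (C a) (C b) * n :=
    fun a ha b hb hab => one_le_degRatio_mul_card G <| hG.one_le_maxDegFrom G
      ((hdisj a ha b hb hab).mono (hCB a ha).1 (hCB b hb).1)
      (hcSig.trans (hCwide a ha)) (hcSig.trans (hCwide b hb))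
  obtain ⟨S, hSI₀, hScard, a, ha, b, hb, hab, hband⟩ :=
    hres.exists_isBand G hαμ hα hn hψ hφ hlow k.succ_pos (hK.trans hI₀K.ge)
  obtain ⟨I', hI'S, hI'k⟩ := exists_subset_card_eq (show k ≤ #S by omega)
  have hI'I₀ : I' ⊆ I₀ := hI'S.trans hSI₀
  refine ⟨I', hI'I₀.trans hI₀I, hI'k, C,
    fun i hi => ⟨(hCB i (hI'I₀ hi)).1, Set.nonempty_of_ncard_ne_zero (hCpos i (hI'I₀ hi)).ne'⟩,
    shrinkageLE_of_forall hSig hn.le fun i hi => hCwide i (hI'I₀ hi),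
    degRatio G (C a) (C b),
    (mul_pos_iff_of_pos_right hn0).1 (one_pos.trans_le (hlow a ha b hb hab)),
    hlink.degRatio_le G hLam (hI₀I ha) (hI₀I hb) hab (hCB a ha).1 (hCB b hb).1 (hCB b hb).2
      (hCpos b hb),
    hband.mono G hI'S⟩

end Assembly

theorem stmt_8_general (k : ℕ) (c phi mu sig Sig Lam : ℝ)
    (hphi0 : 0 < phi) (hmu0 : 0 < mu) (hSig0 : 0 < Sig) (hLam0 : 0 < Lam)
    (h1 : sig < Sig) (h2 : Sig < c) :
    ∃ lam : ℝ, 0 < lam ∧ ∃ N K : ℕ, 2 ≤ K ∧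
      ∀ (V : Type) [Fintype V] (G : SimpleGraph V),
        N ≤ Fintype.card V → NoBigAnticomp G c →
        ∀ (I : Finset ℤ) (B : ℤ → Set V),
          IsBlockade I B → K ≤ I.card → ShrinkageLE I B sig → LinkageLE G I B lam →
          ∃ I' ⊆ I, I'.card = k ∧ ∃ B' : ℤ → Set V,
            (∀ i ∈ I', B' i ⊆ B i ∧ (B' i).Nonempty) ∧
            ShrinkageLE I' B' Sig ∧
            ∃ tau : ℝ, 0 < tau ∧ tau ≤ Lam ∧ IsBand G I' B' tau phi mu := by
  set ψ := phi / 8 with hψ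
  set α := min mu (1 / 2)
  have hα0 : 0 < α := lt_min hmu0 one_half_pos
  set K := (⌈ψ⁻¹⌉₊ + 2) ^ ((⌈ψ⁻¹⌉₊ + 1) * (k + 1) + 1)
  set T := ⌊2 * ((K * K - K : ℕ) : ℝ) / ψ⌋₊ + 1
  have hT : 2 * ((K * K - K : ℕ) : ℝ) < T * ψ :=
    (div_lt_iff₀ (by positivity)).1 ((Nat.lt_floor_add_one _).trans_eq (by simp [T]))
  obtain ⟨N, hN⟩ := Filter.eventually_atTop.1 <|
    (Filter.tendsto_atTop.1 tendsto_natCast_atTop_atTop (2 : ℝ)).and <|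
    (eventually_le_natCast_rpow (α ^ T)⁻¹ (sub_pos.2 h1)).and <|
    (eventually_le_natCast_rpow (α⁻¹ ^ (K * K - K)) (by positivity : 0 < ψ / 2)).and
      (eventually_le_natCast_rpow 4 (by rw [hψ]; linarith : 0 < phi - 4 * ψ))
  refine ⟨Lam * α ^ T, by positivity, N, K, le_add_self.trans (Nat.le_self_pow (by omega) _),
    fun V _ G hGN hG I B hB hKI hσ hlink => ?_⟩
  obtain ⟨hn, hαT, hαM, hφ⟩ := hN _ hGN
  exact hG.exists_banded_subblockade G hB hKI hσ hlink le_rfl hT hα0 (min_le_left _ _)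
    (min_le_right _ _) (by positivity) hLam0.le hSig0.le h2.le (by linarith) hαT hαM hφ

/-- For every integer `k ≥ 0` and `0 < c, φ, μ, σ, Σ, Λ ≤ 1` with
`σ < Σ < c`, there exist `λ > 0` and integers `N` and `K ≥ 2` such that: for every
graph `G` with `|G| ≥ N` and no disjoint anticomplete pair of sets of size
`|G|^(1-c)`, and every blockade of length at least `K` in `G` with shrinkage at most
`σ` and linkage at most `λ`, there exist `I' ⊆ I` with `|I'| = k` and subsets
`B' i ⊆ B i` such that `(B' i : i ∈ I')` has shrinkage at most `Σ` and a
`(φ,μ)`-band which is at most `Λ`. -/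
theorem stmt_8 (k : ℕ) (c phi mu sig Sig Lam : ℝ)
    (hc0 : 0 < c) (hc1 : c ≤ 1) (hphi0 : 0 < phi) (hphi1 : phi ≤ 1)
    (hmu0 : 0 < mu) (hmu1 : mu ≤ 1) (hsig0 : 0 < sig) (hsig1 : sig ≤ 1)
    (hSig0 : 0 < Sig) (hSig1 : Sig ≤ 1) (hLam0 : 0 < Lam) (hLam1 : Lam ≤ 1)
    (h1 : sig < Sig) (h2 : Sig < c) :
    ∃ lam : ℝ, 0 < lam ∧ ∃ N K : ℕ, 2 ≤ K ∧
      ∀ (V : Type) [Fintype V] (G : SimpleGraph V),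
        N ≤ Fintype.card V → NoBigAnticomp G c →
        ∀ (I : Finset ℤ) (B : ℤ → Set V),
          IsBlockade I B → K ≤ I.card → ShrinkageLE I B sig → LinkageLE G I B lam →
          ∃ I' ⊆ I, I'.card = k ∧ ∃ B' : ℤ → Set V,
            (∀ i ∈ I', B' i ⊆ B i ∧ (B' i).Nonempty) ∧
            ShrinkageLE I' B' Sig ∧
            ∃ tau : ℝ, 0 < tau ∧ tau ≤ Lam ∧ IsBand G I' B' tau phi mu :=
  stmt_8_general k c phi mu sig Sig Lam hphi0 hmu0 hSig0 hLam0 h1 h2
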